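/- For every A > 0, the closure of the acute part X_A^ac inside the metric space (X_A, d) equals the non-obtuse part X_A^no. -/

import Mathlib

open Set Filter

noncomputable section

/-- The edge model `X_A`: triples of positive reals satisfying the strict triangle
inequalities and having Heron area `A`. -/
def X (A : ℝ) : Set (Fin 3 → ℝ) :=
  {a | (∀ i, 0 < a i) ∧
    (∀ i j k : Fin 3, i ≠ j → j ≠ k → i ≠ k → a i < a j + a k) ∧
    Real.sqrt ((a 0 + a 1 + a 2) * (-a 0 + a 1 + a 2) *
      (a 0 - a 1 + a 2) * (a 0 + a 1 - a 2)) / 4 = A}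

/-- The non-obtuse part `X_A^no`. -/
def XNo (A : ℝ) : Set (Fin 3 → ℝ) :=
  {a | a ∈ X A ∧ ∀ i j k : Fin 3, i ≠ j → j ≠ k → i ≠ k → a i ^ 2 ≤ a j ^ 2 + a k ^ 2}

/-- The acute part `X_A^ac`. -/
def XAc (A : ℝ) : Set (Fin 3 → ℝ) :=
  {a | a ∈ X A ∧ ∀ i j k : Fin 3, i ≠ j → j ≠ k → i ≠ k → a i ^ 2 < a j ^ 2 + a k ^ 2}

/-- The distance `d(a,b) = max_i |log a_i - log b_i|` on the edge model. -/
def dd (a b : Fin 3 → ℝ) : ℝ :=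
  max |Real.log (a 0) - Real.log (b 0)|
    (max |Real.log (a 1) - Real.log (b 1)| |Real.log (a 2) - Real.log (b 2)|)

/-- The angle at vertex `i` of the triangle with edge lengths `a`, by the law of cosines. -/
def thetaA (a : Fin 3 → ℝ) (i : Fin 3) : ℝ :=
  Real.arccos ((a (i + 1) ^ 2 + a (i + 2) ^ 2 - a i ^ 2) / (2 * a (i + 1) * a (i + 2)))

/- ### Auxiliary material -/

set_option maxHeartbeats 1000000

/-- The Heron product. -/
def S (u v w : ℝ) : ℝ := (u+v+w)*(-u+v+w)*(u-v+w)*(u+v-w)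

lemma sym3 (f : Fin 3 → ℝ) (i j k : Fin 3) (hij : i ≠ j) (hjk : j ≠ k) (hik : i ≠ k) :
    S (f 0) (f 1) (f 2) = S (f i) (f j) (f k) := by
  fin_cases i <;> fin_cases j <;> fin_cases k <;> simp_all [S] <;> ring

lemma fin3_cases : ∀ i j k m : Fin 3, i ≠ j → j ≠ k → i ≠ k → m = i ∨ m = j ∨ m = k := by
  decide

lemma tri_of_acute {u v w : ℝ} (hu : 0 < u) (hv : 0 < v) (hw : 0 < w)
    (h : u ^ 2 < v ^ 2 + w ^ 2) : u < v + w := by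
  nlinarith [mul_pos hv hw]

lemma neg_log_le {c : ℝ} (h0 : 0 < c) (h1 : c ≤ 1/2) : -Real.log (1 - c) ≤ 2*c := by
  have h2 : (0:ℝ) < 1 - c := by linarith
  have h3 : (0:ℝ) < 1 + 2*c := by linarith
  have h4 : Real.log (1 + 2*c) ≤ 2*c := by
    have := Real.log_le_sub_one_of_pos h3; linarith
  have h5 : 1/(1+2*c) ≤ 1 - c := by
    rw [div_le_iff₀ h3]; nlinarith
  have h6 : Real.log (1/(1+2*c)) ≤ Real.log (1 - c) :=
    Real.log_le_log (by positivity) h5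
  rw [one_div, Real.log_inv] at h6
  linarith

lemma log_close {u v c : ℝ} (hu : 0 < u) (hv : 0 < v) (hc0 : 0 < c) (hc : c ≤ 1/2)
    (hlow : v^2*(1-c) ≤ u^2) (hhigh : u^2*(1-c) ≤ v^2) :
    |Real.log u - Real.log v| ≤ c := by
  have h1c : (0:ℝ) < 1 - c := by linarith
  have hlog : Real.log (1 - c) ≥ -(2*c) := by linarith [neg_log_le hc0 hc]
  have e1 : Real.log (v^2*(1-c)) ≤ Real.log (u^2) :=
    Real.log_le_log (by positivity) hlow
  have e2 : Real.log (u^2*(1-c)) ≤ Real.log (v^2) :=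
    Real.log_le_log (by positivity) hhigh
  rw [Real.log_mul (by positivity) h1c.ne', Real.log_pow, Real.log_pow] at e1 e2
  push_cast at e1 e2
  rw [abs_sub_le_iff]
  constructor <;> linarith

/-- Construction of a nearby acute triangle with the same area, from the two legs of a
right triangle. -/
lemma construct {pp qq c : ℝ} (hp : 0 < pp) (hq : 0 < qq) (hc0 : 0 < c) (hc12 : c ≤ 1/2)
    (hpc : pp*c < qq) (hqc : qq*c < pp) :
    ∃ x y z : ℝ, 0 < x ∧ 0 < y ∧ 0 < z ∧
      z^2 < x^2+y^2 ∧ x^2 < y^2+z^2 ∧ y^2 < z^2+x^2 ∧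
      S z x y = 4*pp^2*qq^2 ∧
      |Real.log x - Real.log pp| ≤ c ∧ |Real.log y - Real.log qq| ≤ c ∧
      ∀ hh : ℝ, 0 < hh → hh^2 = pp^2+qq^2 → |Real.log z - Real.log hh| ≤ c := by
  have h1c2 : (0:ℝ) < 1 - c^2 := by nlinarith
  set s : ℝ := Real.sqrt (1 - c^2) with hsdef
  have hs0 : 0 < s := Real.sqrt_pos.mpr h1c2
  have hs2 : s^2 = 1 - c^2 := Real.sq_sqrt h1c2.le
  have hs1 : s ≤ 1 := by nlinarith
  have hs_ge : 1 - c ≤ s := by nlinarith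
  set r : ℝ := Real.sqrt s with hrdef
  have hr0 : 0 < r := Real.sqrt_pos.mpr hs0
  have hr2 : r^2 = s := Real.sq_sqrt hs0.le
  have hnum : 0 < pp^2 + qq^2 - 2*pp*qq*c := by nlinarith [sq_nonneg (pp-qq), mul_pos hp hq]
  have hw2 : 0 < (pp^2 + qq^2 - 2*pp*qq*c)/s := div_pos hnum hs0
  refine ⟨pp/r, qq/r, Real.sqrt ((pp^2 + qq^2 - 2*pp*qq*c)/s), by positivity, by positivity,
    Real.sqrt_pos.mpr hw2, ?_, ?_, ?_, ?_, ?_, ?_, ?_⟩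
  · rw [Real.sq_sqrt hw2.le, div_pow, div_pow, hr2, ← add_div]
    exact (div_lt_div_iff_of_pos_right hs0).mpr (by nlinarith [mul_pos hp hq])
  · rw [Real.sq_sqrt hw2.le, div_pow, div_pow, hr2, ← add_div]
    exact (div_lt_div_iff_of_pos_right hs0).mpr
      (by nlinarith [mul_pos (mul_pos hp hc0) hq, mul_pos hq hq])
  · rw [Real.sq_sqrt hw2.le, div_pow, div_pow, hr2, ← add_div]
    exact (div_lt_div_iff_of_pos_right hs0).mpr
      (by nlinarith [mul_pos (mul_pos hq hc0) hp, mul_pos hp hp])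
  · have e : ∀ u v w : ℝ, S u v w = 4*v^2*w^2 - (v^2+w^2-u^2)^2 := by
      intro u v w; unfold S; ring
    rw [e, Real.sq_sqrt hw2.le, div_pow, div_pow, hr2]
    field_simp
    linear_combination (-(4*pp^2*qq^2)) * hs2
  · apply log_close (by positivity) hp hc0 hc12
    · rw [div_pow, hr2, le_div_iff₀ hs0]
      nlinarith [mul_pos hp hp, hs0.le, hs1, hc0.le,
        mul_nonneg (mul_nonneg (sq_nonneg pp) (by linarith : (0:ℝ) ≤ 1-c))
          (by linarith : (0:ℝ) ≤ 1-s)]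
    · rw [div_pow, hr2, div_mul_eq_mul_div, div_le_iff₀ hs0]
      nlinarith [mul_nonneg (sq_nonneg pp) (by linarith : (0:ℝ) ≤ s-(1-c))]
  · apply log_close (by positivity) hq hc0 hc12
    · rw [div_pow, hr2, le_div_iff₀ hs0]
      nlinarith [mul_pos hq hq, hs0.le, hs1, hc0.le,
        mul_nonneg (mul_nonneg (sq_nonneg qq) (by linarith : (0:ℝ) ≤ 1-c))
          (by linarith : (0:ℝ) ≤ 1-s)]
    · rw [div_pow, hr2, div_mul_eq_mul_div, div_le_iff₀ hs0]
      nlinarith [mul_nonneg (sq_nonneg qq) (by linarith : (0:ℝ) ≤ s-(1-c))]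
  · intro hh hH hhsq
    apply log_close (Real.sqrt_pos.mpr hw2) hH hc0 hc12
    · rw [Real.sq_sqrt hw2.le, hhsq, le_div_iff₀ hs0]
      nlinarith [mul_nonneg (mul_nonneg (by positivity : (0:ℝ) ≤ pp^2+qq^2)
          (by linarith : (0:ℝ) ≤ 1-c)) (by linarith : (0:ℝ) ≤ 1-s),
        mul_nonneg hc0.le (sq_nonneg (pp-qq))]
    · rw [Real.sq_sqrt hw2.le, hhsq, div_mul_eq_mul_div, div_le_iff₀ hs0]
      nlinarith [mul_nonneg hnum.le (by linarith : (0:ℝ) ≤ s-(1-c)),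
        mul_pos (mul_pos (mul_pos hp hq) hc0) hs0]

lemma log_lt_exp_bounds {u v ε : ℝ} (hu : 0 < u) (hv : 0 < v)
    (h : |Real.log u - Real.log v| < ε) : u < v * Real.exp ε ∧ v < u * Real.exp ε := by
  rw [abs_sub_lt_iff] at h
  constructor
  · calc u = Real.exp (Real.log u) := (Real.exp_log hu).symm
      _ < Real.exp (Real.log v + ε) := by apply Real.exp_lt_exp.mpr; linarith [h.1]
      _ = v * Real.exp ε := by rw [Real.exp_add, Real.exp_log hv]
  · calc v = Real.exp (Real.log v) := (Real.exp_log hv).symm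
      _ < Real.exp (Real.log u + ε) := by apply Real.exp_lt_exp.mpr; linarith [h.2]
      _ = u * Real.exp ε := by rw [Real.exp_add, Real.exp_log hu]

lemma dd_coord {a b : Fin 3 → ℝ} {ε : ℝ} (h : dd a b < ε) (m : Fin 3) :
    |Real.log (a m) - Real.log (b m)| < ε := by
  unfold dd at h
  rw [max_lt_iff, max_lt_iff] at h
  fin_cases m
  exacts [h.1, h.2.1, h.2.2]

/-- The key approximation lemma: a right triangle in `X A` can be approximated by
acute triangles in `X A`. -/
lemma key (A : ℝ) (b : Fin 3 → ℝ) (hb : b ∈ X A) (i j k : Fin 3)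
    (hij : i ≠ j) (hjk : j ≠ k) (hik : i ≠ k)
    (heq : b i ^ 2 = b j ^ 2 + b k ^ 2) {ε : ℝ} (hε : 0 < ε) :
    ∃ a ∈ XAc A, dd a b < ε := by
  obtain ⟨hbpos, hbtri, hbA⟩ := hb
  have hp : 0 < b j := hbpos j
  have hq : 0 < b k := hbpos k
  have hH : 0 < b i := hbpos i
  obtain ⟨c, hc0, hcε, hc12, hpc, hqc⟩ :
      ∃ c : ℝ, 0 < c ∧ c < ε ∧ c ≤ 1/2 ∧ b j * c < b k ∧ b k * c < b j := by
    refine ⟨min (ε/2) (min (1/2) (min (b k/(2*b j)) (b j/(2*b k)))), ?_, ?_, ?_, ?_, ?_⟩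
    · exact lt_min (by linarith) (lt_min (by norm_num) (lt_min (by positivity) (by positivity)))
    · calc min (ε/2) _ ≤ ε/2 := min_le_left _ _
        _ < ε := by linarith
    · exact le_trans (min_le_right _ _) (min_le_left _ _)
    · have h1 : min (ε/2) (min (1/2) (min (b k/(2*b j)) (b j/(2*b k)))) ≤ b k/(2*b j) :=
        le_trans (min_le_right _ _) (le_trans (min_le_right _ _) (min_le_left _ _))
      have h2 : b j * (b k/(2*b j)) = b k/2 := by field_simp
      nlinarith
    · have h1 : min (ε/2) (min (1/2) (min (b k/(2*b j)) (b j/(2*b k)))) ≤ b j/(2*b k) :=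
        le_trans (min_le_right _ _) (le_trans (min_le_right _ _) (min_le_right _ _))
      have h2 : b k * (b j/(2*b k)) = b j/2 := by field_simp
      nlinarith
  obtain ⟨x, y, z, hx0, hy0, hz0, hzxy, hxyz, hyzx, hS, hlx, hly, hlz'⟩ :=
    construct hp hq hc0 hc12 hpc hqc
  have hlz := hlz' (b i) hH heq
  set a : Fin 3 → ℝ := fun m => if m = i then z else if m = j then x else y with hadef
  have hai : a i = z := by simp [hadef]
  have haj : a j = x := by simp [hadef, Ne.symm hij]
  have hak : a k = y := by simp [hadef, Ne.symm hik, Ne.symm hjk]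
  have hapos : ∀ m, 0 < a m := by
    intro m; simp only [hadef]; split_ifs <;> assumption
  have hacute : ∀ i' j' k' : Fin 3, i' ≠ j' → j' ≠ k' → i' ≠ k' →
      a i' ^ 2 < a j' ^ 2 + a k' ^ 2 := by
    intro i' j' k' n1 n2 n3
    rcases fin3_cases i j k i' hij hjk hik with e1|e1|e1 <;>
      rcases fin3_cases i j k j' hij hjk hik with e2|e2|e2 <;>
      rcases fin3_cases i j k k' hij hjk hik with e3|e3|e3 <;>
      first
        | exact absurd (e1.trans e2.symm) n1
        | exact absurd (e2.trans e3.symm) n2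
        | exact absurd (e1.trans e3.symm) n3
        | (rw [e1, e2, e3]; simp only [hai, haj, hak]; linarith)
  have htri : ∀ i' j' k' : Fin 3, i' ≠ j' → j' ≠ k' → i' ≠ k' → a i' < a j' + a k' :=
    fun i' j' k' h1 h2 h3 =>
      tri_of_acute (hapos i') (hapos j') (hapos k') (hacute i' j' k' h1 h2 h3)
  have hareaA : Real.sqrt (S (a 0) (a 1) (a 2)) / 4 = A := by
    have h1 : S (a 0) (a 1) (a 2) = S z x y := by
      rw [sym3 a i j k hij hjk hik, hai, haj, hak]
    have h2 : S (b 0) (b 1) (b 2) = S (b i) (b j) (b k) := sym3 b i j k hij hjk hik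
    have h3 : S (b i) (b j) (b k) = 4 * (b j)^2 * (b k)^2 := by
      have e : ∀ u v w : ℝ, S u v w = 4*v^2*w^2 - (v^2+w^2-u^2)^2 := by
        intro u v w; unfold S; ring
      rw [e, heq]; ring
    have hbA' : Real.sqrt (S (b 0) (b 1) (b 2)) / 4 = A := hbA
    rw [h2, h3] at hbA'
    rw [h1, hS]
    convert hbA' using 4 <;> ring
  refine ⟨a, ⟨⟨hapos, htri, hareaA⟩, hacute⟩, ?_⟩
  have hcoord : ∀ m : Fin 3, |Real.log (a m) - Real.log (b m)| ≤ c := by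
    intro m
    rcases fin3_cases i j k m hij hjk hik with e|e|e
    · rw [e, hai]; exact hlz
    · rw [e, haj]; exact hlx
    · rw [e, hak]; exact hly
  have h0 := hcoord 0
  have h1 := hcoord 1
  have h2 := hcoord 2
  unfold dd
  exact max_lt (lt_of_le_of_lt h0 hcε)
    (max_lt (lt_of_le_of_lt h1 hcε) (lt_of_le_of_lt h2 hcε))

/-- The closure of the acute part inside the metric space `(X_A, d)` is the
non-obtuse part. -/
theorem stmt10 (A : ℝ) (hA : 0 < A) :
    {b | b ∈ X A ∧ ∀ ε : ℝ, 0 < ε → ∃ a ∈ XAc A, dd a b < ε} = XNo A := by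
  ext b
  simp only [Set.mem_setOf_eq, XNo]
  constructor
  · rintro ⟨hbX, happ⟩
    refine ⟨hbX, ?_⟩
    intro i j k hij hjk hik
    by_contra hlt
    push_neg at hlt
    have hbpos := hbX.1
    have hden : 0 < b j ^ 2 + b k ^ 2 := by
      have := hbpos j; have := hbpos k; positivity
    have hR1 : 1 < b i ^ 2 / (b j ^ 2 + b k ^ 2) := (one_lt_div hden).mpr hlt
    have hR0 : 0 < b i ^ 2 / (b j ^ 2 + b k ^ 2) := by linarith
    have hlogR : 0 < Real.log (b i ^ 2 / (b j ^ 2 + b k ^ 2)) := Real.log_pos hR1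
    obtain ⟨a, ⟨⟨hapos, -, -⟩, hacute⟩, hdd⟩ :=
      happ (Real.log (b i ^ 2 / (b j ^ 2 + b k ^ 2)) / 4) (by linarith)
    set E := Real.exp (Real.log (b i ^ 2 / (b j ^ 2 + b k ^ 2)) / 4) with hEdef
    have hE0 : 0 < E := Real.exp_pos _
    have hE4 : E ^ 4 = b i ^ 2 / (b j ^ 2 + b k ^ 2) := by
      have h4 : ((4:ℕ):ℝ) * (Real.log (b i ^ 2 / (b j ^ 2 + b k ^ 2)) / 4)
          = Real.log (b i ^ 2 / (b j ^ 2 + b k ^ 2)) := by push_cast; ring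
      rw [hEdef, ← Real.exp_nat_mul, h4, Real.exp_log hR0]
    have hbi := (log_lt_exp_bounds (hapos i) (hbpos i) (dd_coord hdd i)).2
    have haj := (log_lt_exp_bounds (hapos j) (hbpos j) (dd_coord hdd j)).1
    have hak := (log_lt_exp_bounds (hapos k) (hbpos k) (dd_coord hdd k)).1
    have hacu := hacute i j k hij hjk hik
    have s1 : b i ^ 2 < a i ^ 2 * E ^ 2 := by nlinarith [hapos i, hbpos i, hE0]
    have s2 : a j ^ 2 < b j ^ 2 * E ^ 2 := by nlinarith [hapos j, hbpos j, hE0]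
    have s3 : a k ^ 2 < b k ^ 2 * E ^ 2 := by nlinarith [hapos k, hbpos k, hE0]
    have s4 : b i ^ 2 < (b j ^ 2 + b k ^ 2) * E ^ 4 := by
      nlinarith [mul_pos hE0 hE0, sq_nonneg E, pow_pos hE0 2]
    rw [hE4] at s4
    rw [mul_div_cancel₀ _ hden.ne'] at s4
    exact lt_irrefl _ s4
  · rintro ⟨hbX, hno⟩
    refine ⟨hbX, ?_⟩
    intro ε hε
    by_cases hac : b ∈ XAc A
    · exact ⟨b, hac, by simpa [dd] using hε⟩
    · have hnall : ¬ ∀ i j k : Fin 3, i ≠ j → j ≠ k → i ≠ k →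
          b i ^ 2 < b j ^ 2 + b k ^ 2 := fun hall => hac ⟨hbX, hall⟩
      push_neg at hnall
      obtain ⟨i, j, k, hij, hjk, hik, hge⟩ := hnall
      exact key A b hbX i j k hij hjk hik (le_antisymm (hno i j k hij hjk hik) hge) hε
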